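/- arXiv:math/0407490 — 3 statements merged into one kernel-verified Lean document; each statement's English description precedes it below -/
import Mathlib

section
/- Fix (ξ,η) ∈ ℂ² and a tangent vector (u,v) ∈ ℂ². Define the real vectors X₂ = 2Re[(√2·u/(1+|ξ|²))·e₊(ξ)] and X₁ = 2Re[(√2/(1+|ξ|²))·(v − 2·conj(ξ)·η·u/(1+|ξ|²))·e₊(ξ)] in ℝ³ (real part taken componentwise), so that X(r) = X₁ + r·X₂ is the Jacobi field orthogonal to the line corresponding to (u,v). Then q_{(ξ,η)}(u,v) = ⟨X₁ × X₂, e₀(ξ)⟩, i.e. the G-length of the tangent vector equals the angular momentum of the associated Jacobi field about the line, where × is the cross product and ⟨·,·⟩ the Euclidean inner product on ℝ³. -/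
open Complex ComplexConjugate Matrix

/-- The neutral Kähler metric on the space `𝕋 ≅ ℂ²` of oriented lines, as a real
quadratic form on the tangent vector `(u,v)` at the point `(ξ,η)`. -/
noncomputable def q (ξ η : ℂ) (u v : ℂ) : ℝ :=
  -4 * (v * conj u).im / (1 + normSq ξ) ^ 2 -
    8 * (ξ * conj η).im * normSq u / (1 + normSq ξ) ^ 3

/-- The unit direction vector `e₀(ξ) ∈ ℝ³`. -/
noncomputable def e0R (ξ : ℂ) : Fin 3 → ℝ :=
  ![2 * ξ.re / (1 + normSq ξ), 2 * ξ.im / (1 + normSq ξ),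
    (1 - normSq ξ) / (1 + normSq ξ)]

/-- The complex null vector `e₊(ξ) ∈ ℂ³`. -/
noncomputable def ePlus (ξ : ℂ) : Fin 3 → ℂ :=
  ![(1 - conj ξ ^ 2) / ((Real.sqrt 2 * (1 + normSq ξ) : ℝ) : ℂ),
    -I * (1 + conj ξ ^ 2) / ((Real.sqrt 2 * (1 + normSq ξ) : ℝ) : ℂ),
    -2 * conj ξ / ((Real.sqrt 2 * (1 + normSq ξ) : ℝ) : ℂ)]

/-!
Both Jacobi fields are real parts of complex multiples of the null vector `e₊`:
`X₁ = 2 Re(α e₊)` and `X₂ = 2 Re(β e₊)`. For any complex vector `e`, the cross product of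
`Re(α e)` and `Re(β e)` is `Im(α β̄) • (Re e × Im e)`, and `Re e₊ × Im e₊ = -e₀/2` because
`(√2 Re e₊, -√2 Im e₊, e₀)` is a positive orthonormal frame. Hence `⟨X₁ × X₂, e₀⟩ = -2 Im(α β̄)`, which
expands to the formula for `G`.
-/

theorem crossProduct_re_mul_re_mul (e : Fin 3 → ℂ) (α β : ℂ) :
    crossProduct (fun i => (α * e i).re) (fun i => (β * e i).re) =
      (α * conj β).im • crossProduct (fun i => (e i).re) (fun i => (e i).im) := by
  ext i
  fin_cases i <;>
    simp only [cross_apply, mul_re, mul_im, conj_re, conj_im, Pi.smul_apply, smul_eq_mul,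
      Fin.isValue, Fin.reduceFinMk, Fin.zero_eta, Fin.mk_one, cons_val] <;> ring

lemma one_add_normSq_pos (ξ : ℂ) : 0 < 1 + normSq ξ :=
  add_pos_of_pos_of_nonneg one_pos (normSq_nonneg ξ)

noncomputable def ePlusNumerator (ξ : ℂ) : Fin 3 → ℂ :=
  ![1 - conj ξ ^ 2, -I * (1 + conj ξ ^ 2), -2 * conj ξ]

lemma ePlus_eq_smul (ξ : ℂ) :
    ePlus ξ = ((Real.sqrt 2 * (1 + normSq ξ))⁻¹ : ℝ) • ePlusNumerator ξ := by
  ext i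
  fin_cases i <;> simp [ePlus, ePlusNumerator, div_eq_inv_mul]

theorem crossProduct_re_im_ePlusNumerator (ξ : ℂ) :
    crossProduct (fun i => (ePlusNumerator ξ i).re) (fun i => (ePlusNumerator ξ i).im) =
      -(1 + normSq ξ) ^ 2 • e0R ξ := by
  have hD := (one_add_normSq_pos ξ).ne'
  ext i
  fin_cases i <;>
    simp only [ePlusNumerator, e0R, cross_apply, normSq_apply, pow_two, Pi.smul_apply, smul_eq_mul,
      Fin.isValue, Fin.reduceFinMk, Fin.zero_eta, Fin.mk_one, cons_val, mul_re, mul_im, add_re,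
      add_im, sub_re, sub_im, neg_re, neg_im, one_re, one_im, I_re, I_im, conj_re, conj_im,
      re_ofNat, im_ofNat] <;>
    field_simp <;> ring

theorem crossProduct_re_im_ePlus (ξ : ℂ) :
    crossProduct (fun i => (ePlus ξ i).re) (fun i => (ePlus ξ i).im) = -(1 / 2 : ℝ) • e0R ξ := by
  set c : ℝ := (Real.sqrt 2 * (1 + normSq ξ))⁻¹ with hc
  have hre : (fun i => (ePlus ξ i).re) = c • fun i => (ePlusNumerator ξ i).re := by
    ext i; simp only [ePlus_eq_smul, Pi.smul_apply, real_smul, re_ofReal_mul, smul_eq_mul, c]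
  have him : (fun i => (ePlus ξ i).im) = c • fun i => (ePlusNumerator ξ i).im := by
    ext i; simp only [ePlus_eq_smul, Pi.smul_apply, real_smul, im_ofReal_mul, smul_eq_mul, c]
  have hc2 : c * c * (1 + normSq ξ) ^ 2 = 1 / 2 := by
    have hD := (one_add_normSq_pos ξ).ne'
    rw [hc, ← mul_inv, ← pow_two, mul_pow, Real.sq_sqrt zero_le_two]
    field_simp
  rw [hre, him, LinearMap.map_smul₂, map_smul, crossProduct_re_im_ePlusNumerator, smul_smul,
    smul_smul, ← hc2]
  ring_nf

theorem e0R_dotProduct_self (ξ : ℂ) : e0R ξ ⬝ᵥ e0R ξ = 1 := by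
  have hD := (one_add_normSq_pos ξ).ne'
  simp only [normSq_apply, dotProduct, e0R, Fin.sum_univ_three, Fin.isValue, cons_val] at hD ⊢
  field_simp
  ring

theorem crossProduct_two_re_mul_ePlus_dotProduct_e0R (ξ α β : ℂ) :
    crossProduct (fun i => 2 * (α * ePlus ξ i).re) (fun i => 2 * (β * ePlus ξ i).re) ⬝ᵥ
      e0R ξ = -2 * (α * conj β).im := by
  change crossProduct ((2 : ℝ) • fun i => (α * ePlus ξ i).re)
    ((2 : ℝ) • fun i => (β * ePlus ξ i).re) ⬝ᵥ e0R ξ = _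
  rw [LinearMap.map_smul₂, map_smul, crossProduct_re_mul_re_mul, crossProduct_re_im_ePlus,
    smul_smul, smul_smul, smul_smul, smul_dotProduct, e0R_dotProduct_self, smul_eq_mul]
  ring

lemma im_sub_mul_conj (ξ η u v : ℂ) :
    ((v - 2 * conj ξ * η * u / ((1 + normSq ξ : ℝ) : ℂ)) * conj u).im =
      (v * conj u).im + 2 * (ξ * conj η).im * normSq u / (1 + normSq ξ) := by
  have h : 2 * conj ξ * η * u / ((1 + normSq ξ : ℝ) : ℂ) * conj u =
      ((2 * normSq u / (1 + normSq ξ) : ℝ) : ℂ) * conj (ξ * conj η) := by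
    rw [map_mul, conj_conj]
    push_cast
    rw [← mul_conj u]
    ring
  rw [sub_mul, sub_im, h, im_ofReal_mul, conj_im]
  ring

theorem q_eq_im_mul_conj (ξ η u v : ℂ) :
    q ξ η u v = -4 * ((v - 2 * conj ξ * η * u / ((1 + normSq ξ : ℝ) : ℂ)) * conj u).im /
      (1 + normSq ξ) ^ 2 := by
  have hD := (one_add_normSq_pos ξ).ne'
  rw [q, im_sub_mul_conj]
  field_simp
  ring

/-- the `G`-length of a tangent vector `(u,v)` at `(ξ,η)` equals the
angular momentum `⟨X₁ × X₂, e₀(ξ)⟩` of the associated orthogonal Jacobi field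
`X(r) = X₁ + r·X₂` about the line. -/
theorem metric_is_angular_momentum (ξ η u v : ℂ)
    (X₂ : Fin 3 → ℝ)
    (hX₂ : X₂ = fun i =>
      2 * ((((Real.sqrt 2 : ℝ) : ℂ) * u / ((1 + normSq ξ : ℝ) : ℂ)) * ePlus ξ i).re)
    (X₁ : Fin 3 → ℝ)
    (hX₁ : X₁ = fun i =>
      2 * ((((Real.sqrt 2 / (1 + normSq ξ) : ℝ) : ℂ)) *
        (v - 2 * conj ξ * η * u / ((1 + normSq ξ : ℝ) : ℂ)) * ePlus ξ i).re) :
    q ξ η u v = crossProduct X₁ X₂ ⬝ᵥ e0R ξ := by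
  subst hX₁ hX₂
  rw [crossProduct_two_re_mul_ePlus_dotProduct_e0R, q_eq_im_mul_conj]
  set D : ℝ := 1 + normSq ξ
  set w := v - 2 * conj ξ * η * u / (D : ℂ)
  have hD : D ≠ 0 := (one_add_normSq_pos ξ).ne'
  have hcoeff : ((Real.sqrt 2 / D : ℝ) : ℂ) * w * conj ((Real.sqrt 2 : ℂ) * u / (D : ℂ)) =
      ((2 / D ^ 2 : ℝ) : ℂ) * (w * conj u) := by
    rw [map_div₀, map_mul, conj_ofReal, conj_ofReal]
    push_cast
    field_simp
    rw [← ofReal_pow, Real.sq_sqrt zero_le_two]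
    push_cast
    ring
  rw [hcoeff, im_ofReal_mul]
  field_simp
  ring
end

section
/- Let b₁ : ℂ → ℂ be an entire function. Then (1+|ξ|²)·(b₁'(ξ) − conj(b₁'(ξ))) = 2·conj(ξ)·b₁(ξ) − 2·ξ·conj(b₁(ξ)) holds for all ξ ∈ ℂ if and only if there exist c₃ ∈ ℂ and c₄ ∈ ℝ such that b₁(ξ) = c₃ + c₄·ξ − conj(c₃)·ξ² for all ξ ∈ ℂ. -/
open Complex ComplexConjugate Filter Topology

/-!
Replacing `conj ξ` by an independent variable `w` polarizes the equation into
`killingPolarization b₁ (ξ, w) = 0`, whose left side is holomorphic on `ℂ × ℂ` because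
`conj ∘ b₁ ∘ conj` is entire. A holomorphic function on `ℂ × ℂ` vanishing at all `(z, conj z)`
vanishes identically: in the coordinates `(u + I v, u - I v)` this set is `ℝ × ℝ`, and the
one-variable identity theorem applies in `v` and then in `u`. At `w = 0` this gives
`b₁' ξ = conj (b₁' 0) - 2 conj (b₁ 0) ξ`, the equation at `ξ = 0` says that `b₁' 0` is real,
and integrating yields the quadratic.
-/

theorem Differentiable.eq_zero_of_forall_ofReal {g : ℂ → ℂ} (hg : Differentiable ℂ g)
    (h : ∀ r : ℝ, g r = 0) (z : ℂ) : g z = 0 := by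
  have hreal : Tendsto ofReal (𝓝[≠] 0) (𝓝[≠] (0 : ℂ)) :=
    continuous_ofReal.continuousWithinAt.tendsto_nhdsWithin fun _ _ ↦ by simp_all
  exact (analyticOnNhd_univ_iff_differentiable.mpr hg)
    |>.eqOn_zero_of_preconnected_of_frequently_eq_zero isPreconnected_univ (Set.mem_univ 0)
      (hreal.frequently (.of_forall h)) (Set.mem_univ z)

theorem Differentiable.eq_zero_of_forall_apply_conj {F : ℂ × ℂ → ℂ} (hF : Differentiable ℂ F)
    (h : ∀ z, F (z, conj z) = 0) (p : ℂ × ℂ) : F p = 0 := by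
  set G : ℂ → ℂ → ℂ := fun u v ↦ F (u + I * v, u - I * v) with hG
  have hG_diff : Differentiable ℂ fun q : ℂ × ℂ ↦ G q.1 q.2 := by fun_prop
  have hG_real (u v : ℝ) : G u v = 0 := by
    simpa [hG, conj_ofReal, sub_eq_add_neg] using h (u + I * v)
  have hG_real_left (u : ℝ) (v : ℂ) : G u v = 0 :=
    (hG_diff.comp (by fun_prop : Differentiable ℂ fun v : ℂ ↦ ((u : ℂ), v)))
      |>.eq_zero_of_forall_ofReal (hG_real u) v
  have hG_zero (u v : ℂ) : G u v = 0 :=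
    (hG_diff.comp (by fun_prop : Differentiable ℂ fun u : ℂ ↦ (u, v)))
      |>.eq_zero_of_forall_ofReal (hG_real_left · v) u
  convert hG_zero ((p.1 + p.2) / 2) ((p.1 - p.2) / (2 * I)) using 2
  ext <;> field_simp <;> ring

noncomputable def killingPolarization (b : ℂ → ℂ) (p : ℂ × ℂ) : ℂ :=
  (1 + p.1 * p.2) * (deriv b p.1 - deriv (conj ∘ b ∘ conj) p.2) -
    2 * (p.2 * b p.1 - p.1 * (conj ∘ b ∘ conj) p.2)

theorem killingPolarization_apply_conj (b : ℂ → ℂ) (z : ℂ) :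
    killingPolarization b (z, conj z) =
      ((1 + normSq z : ℝ) : ℂ) * (deriv b z - conj (deriv b z)) -
        (2 * conj z * b z - 2 * z * conj (b z)) := by
  simp only [killingPolarization, deriv_conj_conj, Function.comp_apply, conj_conj, ofReal_add,
    ofReal_one, ← mul_conj]
  ring

theorem killingPolarization_apply_zero_right (b : ℂ → ℂ) (z : ℂ) :
    killingPolarization b (z, 0) = deriv b z - conj (deriv b 0) + 2 * z * conj (b 0) := by
  simp only [killingPolarization, deriv_conj_conj, Function.comp_apply, map_zero]
  ring

theorem Differentiable.killingPolarization {b : ℂ → ℂ} (hb : Differentiable ℂ b) :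
    Differentiable ℂ (killingPolarization b) := by
  have hb' : Differentiable ℂ (conj ∘ b ∘ conj) := fun z ↦
    differentiableAt_conj_conj_iff.mpr (hb _)
  have := hb.deriv
  have := hb'.deriv
  unfold _root_.killingPolarization
  generalize conj ∘ b ∘ conj = c at *
  fun_prop

noncomputable def translationalKilling (c₃ : ℂ) (c₄ : ℝ) (ξ : ℂ) : ℂ :=
  c₃ + c₄ * ξ - conj c₃ * ξ ^ 2

theorem hasDerivAt_translationalKilling (c₃ : ℂ) (c₄ : ℝ) (ξ : ℂ) :
    HasDerivAt (translationalKilling c₃ c₄) (c₄ - 2 * conj c₃ * ξ) ξ := by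
  refine (((hasDerivAt_id ξ).const_mul (c₄ : ℂ)).const_add c₃ |>.sub
    ((hasDerivAt_pow 2 ξ).const_mul (conj c₃))).congr_deriv ?_
  ring

theorem translationalKilling_killing_equation (c₃ : ℂ) (c₄ : ℝ) (ξ : ℂ) :
    ((1 + normSq ξ : ℝ) : ℂ) *
        (deriv (translationalKilling c₃ c₄) ξ - conj (deriv (translationalKilling c₃ c₄) ξ)) =
      2 * conj ξ * translationalKilling c₃ c₄ ξ - 2 * ξ * conj (translationalKilling c₃ c₄ ξ) := by
  simp only [(hasDerivAt_translationalKilling c₃ c₄ ξ).deriv, translationalKilling, ofReal_add,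
    ofReal_one, ← mul_conj, map_sub, map_add, map_mul, map_pow, conj_conj, conj_ofReal, map_ofNat]
  ring

theorem eq_translationalKilling_of_deriv_eq {b : ℂ → ℂ} (hb : Differentiable ℂ b) {c₄ : ℝ}
    (hderiv : ∀ ξ, deriv b ξ = c₄ - 2 * conj (b 0) * ξ) :
    b = translationalKilling (b 0) c₄ := by
  have hdiff : Differentiable ℂ (translationalKilling (b 0) c₄) := fun ξ ↦
    (hasDerivAt_translationalKilling _ _ ξ).differentiableAt
  refine eq_of_fderiv_eq hb hdiff (fun ξ ↦ ?_) 0 (by simp [translationalKilling])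
  rw [← toSpanSingleton_deriv, ← toSpanSingleton_deriv, hderiv,
    (hasDerivAt_translationalKilling _ _ ξ).deriv]

/-- an entire function `b₁` satisfies the Killing equation
`(1+|ξ|²)·(b₁' − conj(b₁')) = 2·conj(ξ)·b₁ − 2·ξ·conj(b₁)`
iff `b₁(ξ) = c₃ + c₄·ξ − conj(c₃)·ξ²` for some `c₃ ∈ ℂ`, `c₄ ∈ ℝ`. -/
theorem translational_killing_fields (b₁ : ℂ → ℂ) (hb₁ : Differentiable ℂ b₁) :
    (∀ ξ : ℂ,
      ((1 + normSq ξ : ℝ) : ℂ) * (deriv b₁ ξ - conj (deriv b₁ ξ)) =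
        2 * conj ξ * b₁ ξ - 2 * ξ * conj (b₁ ξ)) ↔
    ∃ (c₃ : ℂ) (c₄ : ℝ), ∀ ξ : ℂ,
      b₁ ξ = c₃ + (c₄ : ℂ) * ξ - conj c₃ * ξ ^ 2 := by
  constructor
  · intro h
    have hK := hb₁.killingPolarization.eq_zero_of_forall_apply_conj fun z ↦ by
      rw [killingPolarization_apply_conj, h z, sub_self]
    have hreal : conj (deriv b₁ 0) = deriv b₁ 0 :=
      (sub_eq_zero.mp (by simpa using h 0)).symm
    have hderiv (ξ : ℂ) : deriv b₁ ξ = ((deriv b₁ 0).re : ℂ) - 2 * conj (b₁ 0) * ξ := by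
      linear_combination (killingPolarization_apply_zero_right b₁ ξ).symm.trans (hK (ξ, 0)) +
        hreal - conj_eq_iff_re.mp hreal
    exact ⟨b₁ 0, (deriv b₁ 0).re, congrFun (eq_translationalKilling_of_deriv_eq hb₁ hderiv)⟩
  · rintro ⟨c₃, c₄, hb⟩
    obtain rfl : b₁ = translationalKilling c₃ c₄ := funext hb
    exact translationalKilling_killing_equation c₃ c₄
end

section
/- Let a ∈ ℂ and b ∈ ℝ, and define the translation map F : ℂ² → ℂ² by F(ξ,η) = (ξ, η + a + b·ξ − conj(a)·ξ²), whose differential at (ξ,η) sends a tangent vector (u,v) ∈ ℂ² to (u, v + (b − 2·conj(a)·ξ)·u). Then F is an isometry of the neutral Kähler metric: for all (ξ,η) ∈ ℂ² and all (u,v) ∈ ℂ², q_{F(ξ,η)}(u, v + (b − 2·conj(a)·ξ)·u) = q_{(ξ,η)}(u,v). -/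
/-!
A translation leaves `ξ` fixed and moves `η` by `δ = a + bξ − āξ²`, while its differential adds
`w·u` to `v` with `w = b − 2āξ`. Since `q` is affine in `η` and in `v`, the metric changes by a
multiple of `w.im·(1 + |ξ|²) + 2·Im(ξ δ̄)`, and both summands equal `∓2·Im(ξ ā)·(1 + |ξ|²)`.
-/

open Complex ComplexConjugate

lemma one_add_normSq_ne_zero (ξ : ℂ) : (1 : ℝ) + normSq ξ ≠ 0 :=
  (add_pos_of_pos_of_nonneg one_pos (normSq_nonneg ξ)).ne'

lemma q_add_add_mul (ξ η δ u v w : ℂ) :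
    q ξ (η + δ) u (v + w * u) =
      q ξ η u v - 4 * (w.im * (1 + normSq ξ) + 2 * (ξ * conj δ).im) * normSq u /
        (1 + normSq ξ) ^ 3 := by
  have hv : ((v + w * u) * conj u).im = (v * conj u).im + w.im * normSq u := by
    rw [add_mul, add_im, mul_assoc, mul_conj, im_mul_ofReal]
  have hη : (ξ * conj (η + δ)).im = (ξ * conj η).im + (ξ * conj δ).im := by
    rw [map_add, mul_add, add_im]
  have hN := one_add_normSq_ne_zero ξ
  rw [q, q, hv, hη]
  field_simp
  ring

lemma im_translation_differential (a ξ : ℂ) (b : ℝ) :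
    ((b : ℂ) - 2 * conj a * ξ).im = -2 * (ξ * conj a).im := by
  simp only [sub_im, ofReal_im, mul_im, mul_re, conj_re, conj_im, re_ofNat, im_ofNat]
  ring

lemma im_mul_conj_translation (a ξ : ℂ) (b : ℝ) :
    (ξ * conj (a + b * ξ - conj a * ξ ^ 2)).im = (ξ * conj a).im * (1 + normSq ξ) := by
  simp only [map_sub, map_add, map_mul, conj_conj, conj_ofReal, mul_im, mul_re,
    add_im, add_re, sub_im, sub_re, conj_re, conj_im, ofReal_re, ofReal_im, normSq_apply, pow_two]
  ring

/-- the translation map `F(ξ,η) = (ξ, η + a + bξ − conj(a)ξ²)`,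
with differential `(u,v) ↦ (u, v + (b − 2·conj(a)·ξ)·u)`, is an isometry of the
neutral Kähler metric. -/
theorem translation_is_isometry (a : ℂ) (b : ℝ) :
    ∀ (ξ η : ℂ) (u v : ℂ),
      q ξ (η + a + (b : ℂ) * ξ - conj a * ξ ^ 2) u (v + ((b : ℂ) - 2 * conj a * ξ) * u) =
        q ξ η u v := by
  intro ξ η u v
  have hη : η + a + (b : ℂ) * ξ - conj a * ξ ^ 2 = η + (a + b * ξ - conj a * ξ ^ 2) := by ring
  rw [hη, q_add_add_mul, im_translation_differential, im_mul_conj_translation]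
  ring
end
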